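/- Let X = {x_1, ..., x_m} be a set of nonempty binary strings and construct the directed edge-periodic cycle on vertices v_0, ..., v_m, s with edges (v_{j−1}, v_j) for 1 ≤ j ≤ m, plus (v_m, s) and (s, v_0), where τ((v_m, s)) = 0^m 1 0^(m+1), τ((s, v_0)) = 0^(2m+1) 1, and τ((v_{j−1}, v_j)) = ξ(x_j[0])·...·ξ(x_j[|x_j|−1]) with ξ(c) = c^m 0 1^(m+1). If there exists a position t such that x[t mod |x|] = 1 for all x ∈ X, then the cop starting at v_0 and waiting until time step t·(2m+2), then moving forward each step, catches the robber; hence the cycle is cop-winning. -/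

import Mathlib

namespace EPD

/-- The directed edge from vertex `e` to vertex `e+1` of the cycle is present at time `t`
iff its string `τ e` has a `1` at position `t mod |τ e|`. -/
def present {n : ℕ} (τ : Fin n → List Bool) (e : Fin n) (t : ℕ) : Prop :=
  (τ e).getD (t % (τ e).length) false = true

/-- A legal move on the directed edge-periodic cycle at time `t`: stay, or cross to the
(forward) neighbour along a directed edge present at time `t`. -/
def moveOK {n : ℕ} (τ : Fin n → List Bool) (t : ℕ) (u v : Fin n) : Prop :=
  v = u ∨ (v.val = (u.val + 1) % n ∧ present τ u t)

/-- A strategy: given the time and both current positions, produce the mover's next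
vertex. -/
abbrev Strat (n : ℕ) := ℕ → Fin n → Fin n → Fin n

def copValid {n : ℕ} (τ : Fin n → List Bool) (σ : Strat n) : Prop :=
  ∀ t u r, moveOK τ t u (σ t u r)

def robValid {n : ℕ} (τ : Fin n → List Bool) (σ : Strat n) : Prop :=
  ∀ t c r, moveOK τ t r (σ t c r)

/-- Positions (cop, robber) at the beginning of round `t`; each round the cop moves
first, then the robber (seeing the cop's new position). -/
def pos {n : ℕ} (σc σr : Strat n) (c0 r0 : Fin n) : ℕ → Fin n × Fin n
  | 0 => (c0, r0)
  | t + 1 =>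
      let p := pos σc σr c0 r0 t
      let c' := σc t p.1 p.2
      (c', σr t c' p.2)

/-- The cop eventually catches the robber: either the robber starts on the cop's vertex,
or some cop move lands on the robber's current vertex. -/
def caught {n : ℕ} (σc σr : Strat n) (c0 r0 : Fin n) : Prop :=
  c0 = r0 ∨ ∃ t,
    σc t (pos σc σr c0 r0 t).1 (pos σc σr c0 r0 t).2 = (pos σc σr c0 r0 t).2

def copWinning {n : ℕ} (τ : Fin n → List Bool) : Prop :=
  ∃ c0 σc, copValid τ σc ∧ ∀ r0 σr, robValid τ σr → caught σc σr c0 r0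

def robberWinning {n : ℕ} (τ : Fin n → List Bool) : Prop :=
  ∀ c0 σc, copValid τ σc → ∃ r0 σr, robValid τ σr ∧ ¬ caught σc σr c0 r0

/-- The gadget block `ξ(c) = c^m 0 1^(m+1)` of length `q = 2m+2`. -/
def xiBlock (m : ℕ) (c : Bool) : List Bool :=
  List.replicate m c ++ [false] ++ List.replicate (m + 1) true

/-- The block encoding `ξ(x[0]) ⋯ ξ(x[|x|-1])` of a binary string `x`. -/
def encode (m : ℕ) (x : List Bool) : List Bool := (x.map (xiBlock m)).flatten

/-- The edge strings of the directed edge-periodic cycle of the reduction, on vertices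
`v_0, ..., v_m, s` (vertex `s` is `⟨m+1⟩`): edge `(v_j, v_{j+1})` (for `j < m`) carries
the block encoding of `x_{j+1}`; edge `(v_m, s)` carries `0^m 1 0^(m+1)`;
edge `(s, v_0)` carries `0^(2m+1) 1`. Edges are indexed by their source vertex. -/
def tauRed (m : ℕ) (x : Fin m → List Bool) : Fin (m + 2) → List Bool := fun e =>
  if h : e.val < m then encode m (x ⟨e.val, h⟩)
  else if e.val = m then
    List.replicate m false ++ [true] ++ List.replicate (m + 1) false
  else List.replicate (2 * m + 1) false ++ [true]

end EPD


/-!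
In round `T + j` the sweeping cop crosses the edge out of `v_j`. With `T = t (2m+2)` the edge
`(v_j, v_{j+1})` is read at block `t mod |x_{j+1}|`, position `j < m` of its encoding, which is the
letter `x_{j+1}[t mod |x_{j+1}|] = 1`; the edge `(v_m, s)` is read at position `m`, which is `1`.
So the cop walks from `v_0` to `s` in rounds `T, …, T + m`. The edge `(s, v_0)` is absent during
all these rounds, so a robber ahead of the cop can never wrap around and is eventually cornered.
-/

namespace EPD

lemma xiBlock_length (m : ℕ) (c : Bool) : (xiBlock m c).length = 2 * m + 2 := by
  rw [xiBlock]; simp only [List.length_append, List.length_replicate, List.length_singleton]; omega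

lemma xiBlock_getD_of_lt {m j : ℕ} (c : Bool) (hj : j < m) : (xiBlock m c).getD j false = c := by
  rw [xiBlock, List.append_assoc, List.getD_append _ _ _ _ (by simpa), List.getD_replicate c hj]

lemma encode_cons (m : ℕ) (c : Bool) (y : List Bool) :
    encode m (c :: y) = xiBlock m c ++ encode m y := by
  simp [encode]

lemma encode_length (m : ℕ) (y : List Bool) : (encode m y).length = y.length * (2 * m + 2) := by
  induction y with
  | nil => simp [encode]
  | cons c y ih => rw [encode_cons, List.length_append, ih, xiBlock_length, List.length_cons]; ring

lemma getD_encode (m : ℕ) {y : List Bool} {k r : ℕ} (hk : k < y.length) (hr : r < 2 * m + 2) :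
    (encode m y).getD (k * (2 * m + 2) + r) false = (xiBlock m y[k]).getD r false := by
  induction y generalizing k with
  | nil => simp at hk
  | cons c y ih =>
    rw [encode_cons]
    cases k with
    | zero => simpa using List.getD_append _ _ _ _ (by rwa [xiBlock_length])
    | succ k =>
      rw [List.getD_append_right _ _ _ _ (by rw [xiBlock_length]; nlinarith), xiBlock_length,
        show (k + 1) * (2 * m + 2) + r - (2 * m + 2) = k * (2 * m + 2) + r by
          rw [add_mul, one_mul]; omega]
      exact ih (by simpa using hk)

lemma getD_encode_mod (m : ℕ) {y : List Bool} (hy : y ≠ []) (t : ℕ) {j : ℕ}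
    (hj : j < 2 * m + 2) :
    (encode m y).getD ((t * (2 * m + 2) + j) % (encode m y).length) false =
      (xiBlock m (y.getD (t % y.length) false)).getD j false := by
  have hlen : 0 < y.length := List.length_pos_iff.mpr hy
  have hmod : (t * (2 * m + 2) + j) % (encode m y).length = t % y.length * (2 * m + 2) + j := by
    rw [encode_length, mul_comm y.length, Nat.mod_mul, mul_comm t, Nat.mul_add_mod,
      Nat.mul_add_div (by omega), Nat.mod_eq_of_lt hj, Nat.div_eq_of_lt hj, add_zero, add_comm,
      mul_comm]
  rw [hmod, getD_encode m (Nat.mod_lt _ hlen) hj, List.getD_eq_getElem _ _ (Nat.mod_lt _ hlen)]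

section Sweep

variable {n : ℕ} (τ : Fin (n + 1) → List Bool)

/-- Staying put on the robber's vertex is what catches a robber that stepped onto the cop. -/
def sweep (n T : ℕ) : Strat (n + 1) := fun u c r =>
  if r ≠ c ∧ T + c.val = u ∧ c < Fin.last n then c + 1 else c

lemma sweep_copValid {T : ℕ}
    (hpres : ∀ j : Fin (n + 1), j < Fin.last n → present τ j (T + j)) :
    copValid τ (sweep n T) := by
  intro u c r
  unfold sweep
  split_ifs with h
  · obtain ⟨-, rfl, hlast⟩ := h
    refine Or.inr ⟨?_, hpres c hlast⟩
    rw [Fin.val_add_one_of_lt hlast, Nat.mod_eq_of_lt (by simpa [Fin.lt_def] using hlast)]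
  · exact Or.inl rfl

lemma sweep_val {T u : ℕ} {c r : Fin (n + 1)} (h : r ≠ c) :
    (sweep n T u c r).val = if T + c.val = u ∧ c.val < n then c.val + 1 else c.val := by
  have hlast : c < Fin.last n ↔ c.val < n := by simp [Fin.lt_def]
  unfold sweep
  by_cases hc : T + c.val = u ∧ c.val < n
  · rw [if_pos ⟨h, hc.1, hlast.2 hc.2⟩, if_pos hc, Fin.val_add_one_of_lt (hlast.2 hc.2)]
  · rw [if_neg (by tauto), if_neg hc]

lemma pos_fst_sweep {T : ℕ} (σr : Strat (n + 1)) (r0 : Fin (n + 1))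
    (hapart : ∀ u, (pos (sweep n T) σr 0 r0 u).1 ≠ (pos (sweep n T) σr 0 r0 u).2) (u : ℕ) :
    (pos (sweep n T) σr 0 r0 u).1.val = min (u - T) n := by
  induction u with
  | zero => simp [pos]
  | succ u ih =>
    change (sweep n T u _ _).val = _
    rw [sweep_val (hapart u).symm, ih]
    split_ifs <;> omega

lemma exists_meet_of_sweep {r : ℕ → Fin (n + 1)} {T : ℕ}
    (hr : ∀ u, moveOK τ u (r u) (r (u + 1)))
    (hblock : ∀ j < n, ¬ present τ (Fin.last n) (T + j)) (h0 : r T ≠ 0) :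
    ∃ j < n, (r (T + j)).val = j + 1 := by
  by_contra! hmiss
  have ahead : ∀ j ≤ n, j < (r (T + j)).val := by
    intro j
    induction j with
    | zero => intro _; exact Nat.pos_of_ne_zero fun h => h0 (Fin.ext h)
    | succ j ih =>
      intro hj
      have hjr : j + 2 ≤ (r (T + j)).val := by
        have := hmiss j (by omega)
        have := ih (by omega)
        omega
      rcases hr (T + j) with hstay | ⟨hadv, hpres⟩
      · rw [← add_assoc, hstay]; omega
      · have hnlast : r (T + j) ≠ Fin.last n := fun h => hblock j (by omega) (h ▸ hpres)
        rw [← add_assoc, hadv, Nat.mod_eq_of_lt (by have := Fin.val_lt_last hnlast; omega)]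
        omega
  have := ahead n le_rfl
  omega

theorem sweep_caught {T : ℕ} (hblock : ∀ j < n, ¬ present τ (Fin.last n) (T + j))
    {σr : Strat (n + 1)} (hσr : robValid τ σr) (r0 : Fin (n + 1)) :
    caught (sweep n T) σr 0 r0 := by
  by_contra hnot
  simp only [caught, not_or, not_exists] at hnot
  obtain ⟨-, hmiss⟩ := hnot
  set P := pos (sweep n T) σr 0 r0
  have hapart : ∀ u, (P u).1 ≠ (P u).2 := fun u h => hmiss u (by
    unfold sweep
    rw [if_neg fun hc => hc.1 h.symm, h])
  have hcop : ∀ u, (P u).1.val = min (u - T) n := pos_fst_sweep σr r0 hapart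
  have hrob0 : (P T).2 ≠ 0 := fun h => hapart T (Fin.ext (by rw [hcop, h]; simp))
  obtain ⟨j, hj, hmeet⟩ := exists_meet_of_sweep τ (r := fun u => (P u).2) (fun u => hσr u _ _)
    hblock hrob0
  refine hmiss (T + j) (Fin.ext ?_)
  change (P (T + j + 1)).1.val = _
  rw [hcop]
  omega

end Sweep

section Reduction

variable (m : ℕ) (x : Fin m → List Bool)

lemma present_tauRed_of_lt {j : ℕ} (hj : j < m) {t : ℕ}
    (ht : (x ⟨j, hj⟩).getD (t % (x ⟨j, hj⟩).length) false = true) :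
    present (tauRed m x) ⟨j, by omega⟩ (t * (2 * m + 2) + j) := by
  have hne : x ⟨j, hj⟩ ≠ [] := by intro h; simp [h] at ht
  simp only [present, tauRed, hj, dite_true]
  rw [getD_encode_mod m hne t (by omega), xiBlock_getD_of_lt _ hj, ht]

lemma present_tauRed_m_of_mod {u : ℕ} (hu : u % (2 * m + 2) = m) :
    present (tauRed m x) ⟨m, by omega⟩ u := by
  simp only [present, tauRed, lt_irrefl, dite_false, if_true]
  rw [show (List.replicate m false ++ [true] ++ List.replicate (m + 1) false).length = 2 * m + 2
    by simp only [List.length_append, List.length_replicate, List.length_singleton]; omega,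
    hu, List.append_assoc, List.getD_append_right _ _ _ _ (by simp)]
  simp

lemma not_present_tauRed_last {u : ℕ} (hu : u % (2 * m + 2) ≠ 2 * m + 1) :
    ¬ present (tauRed m x) (Fin.last (m + 1)) u := by
  have hlt : u % (2 * m + 2) < 2 * m + 1 := by
    have := Nat.mod_lt u (by omega : 2 * m + 2 > 0)
    omega
  simp only [present, tauRed, Fin.val_last, show ¬ m + 1 < m by omega, dite_false,
    show m + 1 ≠ m by omega, if_false]
  rw [show (List.replicate (2 * m + 1) false ++ [true]).length = 2 * m + 2 by simp,
    List.getD_append _ _ _ _ (by rw [List.length_replicate]; omega), List.getD_replicate false hlt]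
  simp

end Reduction

end EPD

open EPD in
/-- Forward direction of the reduction: if some position `t` has `x[t mod |x|] = 1` for
all `x ∈ X`, then in the directed edge-periodic cycle of the reduction the cop starting
at `v_0` has a winning strategy; hence the cycle is cop-winning. -/
theorem stmt_12 (m : ℕ) (x : Fin m → List Bool)
    (hyes : ∃ t : ℕ, ∀ j, (x j).getD (t % (x j).length) false = true) :
    (∃ σc, copValid (tauRed m x) σc ∧
      ∀ r0 σr, robValid (tauRed m x) σr → caught σc σr (⟨0, by omega⟩ : Fin (m + 2)) r0) ∧
    copWinning (tauRed m x) := by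
  obtain ⟨t, ht⟩ := hyes
  have hmod : ∀ j < 2 * m + 2, (t * (2 * m + 2) + j) % (2 * m + 2) = j := fun j hj => by
    rw [mul_comm, Nat.mul_add_mod, Nat.mod_eq_of_lt hj]
  have hvalid : copValid (tauRed m x) (sweep (m + 1) (t * (2 * m + 2))) := by
    refine sweep_copValid _ fun ⟨j, _⟩ hj => ?_
    rcases Nat.lt_or_ge j m with hjm | hjm
    · exact present_tauRed_of_lt m x hjm (ht _)
    · obtain rfl : m = j := by simp [Fin.lt_def] at hj; omega
      exact present_tauRed_m_of_mod m x (hmod m (by omega))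
  have hwin : ∀ r0 σr, robValid (tauRed m x) σr →
      caught (sweep (m + 1) (t * (2 * m + 2))) σr 0 r0 :=
    fun r0 _ hσr => sweep_caught _ (fun j hj => not_present_tauRed_last m x
      (by rw [hmod j (by omega)]; omega)) hσr r0
  exact ⟨⟨_, hvalid, hwin⟩, _, _, hvalid, hwin⟩
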